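/- arXiv:1901.07506 — 6 statements merged into one kernel-verified Lean document; each statement's English description precedes it below -/
import Mathlib

section
/- Let k > 0 be a real number, c0 = 0.558, L = ⌊c0·log k⌋ with L ≥ 1, and let n > 0 be a real number. For any a = (a_0, …, a_L) ∈ ℝ^{L+1} with a_0 = −1: (i) if n/k ≤ 6.5·L ≤ n, then sup_{λ ∈ [n/k, n]} g(a, λ) = sup_{λ ∈ [n/k, 6.5·L]} g(a, λ); (ii) if n/k > 6.5·L, then sup_{λ ∈ [n/k, n]} g(a, λ) = g(a, n/k). -/
open Finset

/-- `P L a x = ∑_{l=0}^L a_l x^l`. -/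
noncomputable def P (L : ℕ) (a : ℕ → ℝ) (x : ℝ) : ℝ :=
  ∑ l ∈ range (L + 1), a l * x ^ l

/-- `g(a, λ) = (1/k)·∑_{l=0}^L e^{−λ} a_l² λ^l l! + (e^{−λ} P_L(λ, a))²`. -/
noncomputable def g (k : ℝ) (L : ℕ) (a : ℕ → ℝ) (x : ℝ) : ℝ :=
  (1 / k) * (∑ l ∈ range (L + 1),
      Real.exp (-x) * (a l) ^ 2 * x ^ l * (l.factorial : ℝ))
    + (Real.exp (-x) * P L a x) ^ 2


lemma exp_half13 : (660:ℝ) ≤ Real.exp (13/2) := by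
  have h1 : (2.7182818283:ℝ) ≤ Real.exp 1 := Real.exp_one_gt_d9.le
  have h13 : (435600:ℝ) ≤ Real.exp 13 := by
    have h2 : ((2.7182818283:ℝ))^13 ≤ (Real.exp 1)^13 :=
      pow_le_pow_left₀ (by norm_num) h1 13
    have h3 : Real.exp 1 ^ 13 = Real.exp 13 := by
      rw [← Real.exp_nat_mul]; norm_num
    nlinarith [h2]
  have h4 : Real.exp (13/2) ^ 2 = Real.exp 13 := by
    rw [← Real.exp_nat_mul]; norm_num
  nlinarith [Real.exp_pos (13/2), h4, h13]

lemma exp_ratio : Real.exp (500/279) ≤ 6.02 := by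
  have h1 : Real.exp 1 ≤ 2.7182818286 := Real.exp_one_lt_d9.le
  have h500 : Real.exp 500 ≤ (2.7182818286:ℝ)^500 := by
    rw [show (500:ℝ) = ((500:ℕ):ℝ)*(1:ℝ) by norm_num, Real.exp_nat_mul]
    exact pow_le_pow_left₀ (Real.exp_pos 1).le h1 500
  have h2 : (2.7182818286:ℝ)^500 ≤ 6.02^279 := by
    rw [show 500 = 250*2 by norm_num, show 279 = 93*3 by norm_num, pow_mul, pow_mul]; norm_num
  have h3 : Real.exp (500/279) ^ 279 = Real.exp 500 := by
    rw [← Real.exp_nat_mul]; norm_num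
  refine le_of_pow_le_pow_left₀ (n := 279) (by norm_num) (by norm_num) ?_
  rw [h3]; exact h500.trans h2



lemma fact_le_pow (l j : ℕ) : (l + j).factorial ≤ l.factorial * (l + j)^j := by
  induction j with
  | zero => simp
  | succ j ih =>
    have h1 : (l + (j+1)).factorial = (l + j + 1) * (l + j).factorial := by
      rw [show l + (j+1) = (l+j) + 1 by ring, Nat.factorial_succ]
    rw [h1]
    calc (l + j + 1) * (l + j).factorial ≤ (l + j + 1) * (l.factorial * (l + j)^j) :=
          Nat.mul_le_mul_left _ ih
      _ ≤ (l + j + 1) * (l.factorial * (l + j + 1)^j) := by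
          have := Nat.pow_le_pow_left (Nat.le_succ (l+j)) j
          exact Nat.mul_le_mul_left _ (Nat.mul_le_mul_left _ this)
      _ = l.factorial * (l + (j+1))^(j+1) := by ring_nf
  
lemma key_ind (L : ℕ) (hL : 1 ≤ L) :
    (338:ℝ) * ((13/2)*L)^L * 6.02^(L+1) ≤ 121 * (L.factorial : ℝ) * 660^L := by
  induction L, hL using Nat.le_induction with
  | base => norm_num
  | succ L hL ih =>
    have hLpos : (0:ℝ) < L := by exact_mod_cast hL
    have hexp1 : Real.exp 1 ≤ 2.7182818286 := Real.exp_one_lt_d9.le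
    have hone : ((L:ℝ)+1)^L ≤ (L:ℝ)^L * Real.exp 1 := by
      have h1 : (L:ℝ)+1 ≤ (L:ℝ) * Real.exp (1/L) := by
        have := Real.add_one_le_exp (1/(L:ℝ))
        have h2 := mul_le_mul_of_nonneg_left this hLpos.le
        calc (L:ℝ)+1 = (L:ℝ)*(1/L + 1) := by field_simp; ring
          _ ≤ (L:ℝ) * Real.exp (1/L) := h2
      calc ((L:ℝ)+1)^L ≤ ((L:ℝ) * Real.exp (1/L))^L :=
            pow_le_pow_left₀ (by positivity) h1 L
        _ = (L:ℝ)^L * Real.exp (1/L)^L := mul_pow _ _ _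
        _ = (L:ℝ)^L * Real.exp 1 := by
            rw [← Real.exp_nat_mul]
            congr 1
            field_simp
    have hM : (0:ℝ) ≤ (L:ℝ)+1 := by positivity
    have hMp : ((L:ℝ)+1)^(L+1) ≤ (L:ℝ)^L * Real.exp 1 * ((L:ℝ)+1) := by
      rw [pow_succ]
      exact mul_le_mul_of_nonneg_right hone hM
    calc (338:ℝ) * ((13/2)*(↑(L+1)))^(L+1) * 6.02^(L+1+1)
        = (338 * (13/2)^(L+1) * 6.02^(L+2)) * ((L:ℝ)+1)^(L+1) := by
          push_cast; rw [mul_pow]; ring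
      _ ≤ (338 * (13/2)^(L+1) * 6.02^(L+2)) * ((L:ℝ)^L * Real.exp 1 * ((L:ℝ)+1)) := by
          refine mul_le_mul_of_nonneg_left hMp (by positivity)
      _ = (338 * ((13/2)*L)^L * 6.02^(L+1)) * ((13/2) * 6.02 * Real.exp 1 * ((L:ℝ)+1)) := by
          rw [mul_pow]; ring
      _ ≤ (121 * (L.factorial:ℝ) * 660^L) * ((13/2) * 6.02 * Real.exp 1 * ((L:ℝ)+1)) := by
          refine mul_le_mul_of_nonneg_right ih (by positivity)
      _ ≤ (121 * (L.factorial:ℝ) * 660^L) * (660 * ((L:ℝ)+1)) := by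
          refine mul_le_mul_of_nonneg_left ?_ (by positivity)
          refine mul_le_mul_of_nonneg_right ?_ hM
          nlinarith [hexp1]
      _ = 121 * ((L+1).factorial : ℝ) * 660^(L+1) := by
          rw [Nat.factorial_succ]; push_cast; ring

lemma hasDerivAt_g (k : ℝ) (L : ℕ) (a : ℕ → ℝ) (x : ℝ) :
    HasDerivAt (g k L a)
      ((1/k) * (∑ l ∈ range (L+1),
          (a l)^2 * (l.factorial : ℝ) * (Real.exp (-x) * ((l:ℝ) * x^(l-1) - x^l)))
        + 2 * (Real.exp (-x) * P L a x) *
          (Real.exp (-x) * ((∑ l ∈ range (L+1), a l * ((l:ℝ) * x^(l-1))) - P L a x))) x := by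
  have hexp : HasDerivAt (fun y : ℝ => Real.exp (-y)) (-Real.exp (-x)) x := by
    simpa [Function.comp_def] using (Real.hasDerivAt_exp (-x)).comp x (hasDerivAt_neg x)
  have hmon : ∀ l : ℕ,
      HasDerivAt (fun y : ℝ => Real.exp (-y) * y^l)
        (Real.exp (-x) * ((l:ℝ)*x^(l-1) - x^l)) x := by
    intro l
    have h := hexp.mul (hasDerivAt_pow l x)
    refine h.congr_deriv ?_
    ring
  have hP : HasDerivAt (P L a) (∑ l ∈ range (L+1), a l * ((l:ℝ)*x^(l-1))) x := by
    have : HasDerivAt (fun y : ℝ => ∑ l ∈ range (L+1), a l * y ^ l)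
        (∑ l ∈ range (L+1), a l * ((l:ℝ)*x^(l-1))) x := by
      apply HasDerivAt.fun_sum
      intro l _
      exact (hasDerivAt_pow l x).const_mul (a l)
    exact this
  have hE : HasDerivAt (fun y : ℝ => Real.exp (-y) * P L a y)
      (Real.exp (-x) * ((∑ l ∈ range (L+1), a l * ((l:ℝ)*x^(l-1))) - P L a x)) x := by
    have h := hexp.mul hP
    refine h.congr_deriv ?_
    ring
  have hsum : HasDerivAt (fun y : ℝ => ∑ l ∈ range (L+1),
        Real.exp (-y) * (a l)^2 * y^l * (l.factorial : ℝ))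
      (∑ l ∈ range (L+1),
        (a l)^2 * (l.factorial : ℝ) * (Real.exp (-x) * ((l:ℝ)*x^(l-1) - x^l))) x := by
    apply HasDerivAt.fun_sum
    intro l _
    have h := (hmon l).const_mul ((a l)^2 * (l.factorial : ℝ))
    have heq : (fun y : ℝ => Real.exp (-y) * (a l)^2 * y^l * (l.factorial : ℝ))
        = fun y : ℝ => ((a l)^2 * (l.factorial : ℝ)) * (Real.exp (-y) * y^l) := by
      funext y; ring
    rw [heq]
    exact h
  have := (hsum.const_mul (1/k)).add (hE.pow 2)
  refine this.congr_deriv ?_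
  norm_num

set_option maxHeartbeats 2000000 in
lemma deriv_g_nonpos (k : ℝ) (hk0 : 0 < k) (L : ℕ) (hL1 : 1 ≤ L)
    (hk6 : k ≤ 6.02^(L+1)) (a : ℕ → ℝ)
    (x : ℝ) (hx : 13/2 * L ≤ x) : deriv (g k L a) x ≤ 0 := by
  have hL0 : (1:ℝ) ≤ (L:ℝ) := by exact_mod_cast hL1
  have hx0 : (0:ℝ) < x := by nlinarith
  have hLx : (L:ℝ) ≤ 2/13 * x := by linarith
  have epos : 0 < Real.exp (-x) := Real.exp_pos _
  set S := ∑ l ∈ range (L+1), (a l)^2 * (l.factorial:ℝ) * (Real.exp (-x) * x^l) with hSdef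
  set U := ∑ l ∈ range (L+1), |a l| * (Real.exp (-x) * x^l) with hUdef
  set T := ∑ l ∈ range (L+1), (Real.exp (-x) * x^l) / (l.factorial:ℝ) with hTdef
  set Q := ∑ l ∈ range (L+1), a l * ((l:ℝ) * x^(l-1)) with hQdef
  have hS0 : 0 ≤ S := by
    apply Finset.sum_nonneg; intro l _; positivity
  have hU0 : 0 ≤ U := by
    apply Finset.sum_nonneg; intro l _; positivity
  have hlb : ∀ l ∈ range (L+1),
      0 ≤ (l:ℝ)*x^(l-1) ∧ (l:ℝ)*x^(l-1) ≤ 2/13 * x^l := by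
    intro l hl
    have hlL : l ≤ L := Nat.lt_succ_iff.mp (Finset.mem_range.mp hl)
    cases l with
    | zero => exact ⟨by norm_num, by norm_num⟩
    | succ m =>
      have hm : ((m:ℝ)+1) ≤ 2/13 * x := by
        have : ((m:ℝ)+1) ≤ (L:ℝ) := by exact_mod_cast hlL
        linarith
      have hxm : (0:ℝ) ≤ x^m := pow_nonneg hx0.le m
      constructor
      · show (0:ℝ) ≤ ((m+1:ℕ):ℝ) * x^m
        positivity
      · show ((m+1:ℕ):ℝ) * x^m ≤ 2/13 * x^(m+1)
        push_cast
        calc ((m:ℝ)+1) * x^m ≤ (2/13*x) * x^m := by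
              have : (0:ℝ) ≤ x^m := by positivity
              exact mul_le_mul_of_nonneg_right hm this
          _ = 2/13 * x^(m+1) := by rw [pow_succ]; ring
  -- Part 1
  have hpart1 : (1/k) * (∑ l ∈ range (L+1),
      (a l)^2 * (l.factorial : ℝ) * (Real.exp (-x) * ((l:ℝ) * x^(l-1) - x^l)))
      ≤ (1/k) * (-(11/13) * S) := by
    apply mul_le_mul_of_nonneg_left _ (by positivity : (0:ℝ) ≤ 1/k)
    calc (∑ l ∈ range (L+1),
        (a l)^2 * (l.factorial : ℝ) * (Real.exp (-x) * ((l:ℝ) * x^(l-1) - x^l)))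
        ≤ ∑ l ∈ range (L+1), (-(11/13)) * ((a l)^2 * (l.factorial:ℝ) * (Real.exp (-x) * x^l)) := by
          apply Finset.sum_le_sum
          intro l hl
          have hb := (hlb l hl).2
          have h1 : Real.exp (-x) * ((l:ℝ)*x^(l-1) - x^l)
              ≤ Real.exp (-x) * (-(11/13) * x^l) :=
            mul_le_mul_of_nonneg_left (by linarith) epos.le
          calc (a l)^2 * (l.factorial:ℝ) * (Real.exp (-x) * ((l:ℝ)*x^(l-1) - x^l))
              ≤ (a l)^2 * (l.factorial:ℝ) * (Real.exp (-x) * (-(11/13) * x^l)) :=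
                mul_le_mul_of_nonneg_left h1 (by positivity)
            _ = -(11/13) * ((a l)^2 * (l.factorial:ℝ) * (Real.exp (-x) * x^l)) := by ring
      _ = -(11/13) * S := by rw [hSdef, Finset.mul_sum]
  -- abs bounds
  have hEPeq : Real.exp (-x) * P L a x
      = ∑ l ∈ range (L+1), a l * (Real.exp (-x) * x^l) := by
    rw [P, Finset.mul_sum]
    exact Finset.sum_congr rfl (fun l _ => by ring)
  have hEP : |Real.exp (-x) * P L a x| ≤ U := by
    rw [hEPeq]
    refine (Finset.abs_sum_le_sum_abs _ _).trans ?_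
    apply Finset.sum_le_sum
    intro l _
    rw [abs_mul, abs_of_nonneg (by positivity : (0:ℝ) ≤ Real.exp (-x) * x^l)]
  have hEQeq : Real.exp (-x) * (Q - P L a x)
      = ∑ l ∈ range (L+1), a l * (Real.exp (-x) * ((l:ℝ)*x^(l-1) - x^l)) := by
    rw [hQdef, P, ← Finset.sum_sub_distrib, Finset.mul_sum]
    exact Finset.sum_congr rfl (fun l _ => by ring)
  have hEQ : |Real.exp (-x) * (Q - P L a x)| ≤ U := by
    rw [hEQeq]
    refine (Finset.abs_sum_le_sum_abs _ _).trans ?_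
    apply Finset.sum_le_sum
    intro l hl
    rw [abs_mul]
    apply mul_le_mul_of_nonneg_left _ (abs_nonneg _)
    rw [abs_mul, abs_of_pos epos]
    apply mul_le_mul_of_nonneg_left _ epos.le
    have hb := hlb l hl
    have hxl : (0:ℝ) ≤ x^l := by positivity
    rw [abs_le]
    constructor <;> nlinarith [hb.1, hb.2]
  -- Cauchy-Schwarz
  have hCS : U^2 ≤ S * T := by
    have hfw : ∀ l ∈ range (L+1),
        |a l| * (Real.exp (-x) * x^l)
          = (|a l| * Real.sqrt (l.factorial:ℝ) * Real.sqrt (Real.exp (-x) * x^l))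
            * (Real.sqrt (Real.exp (-x) * x^l) / Real.sqrt (l.factorial:ℝ)) := by
      intro l _
      have hfac : (0:ℝ) < (l.factorial:ℝ) := by exact_mod_cast l.factorial_pos
      have h2 : Real.sqrt (l.factorial:ℝ) ≠ 0 := by positivity
      have h1 : Real.sqrt (Real.exp (-x) * x^l) * Real.sqrt (Real.exp (-x) * x^l)
          = Real.exp (-x) * x^l := Real.mul_self_sqrt (by positivity)
      calc |a l| * (Real.exp (-x) * x^l)
          = |a l| * (Real.sqrt (l.factorial:ℝ) / Real.sqrt (l.factorial:ℝ))
              * (Real.sqrt (Real.exp (-x) * x^l) * Real.sqrt (Real.exp (-x) * x^l)) := by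
            rw [div_self h2, h1]; ring
        _ = _ := by ring
    calc U^2 = (∑ l ∈ range (L+1),
          (|a l| * Real.sqrt (l.factorial:ℝ) * Real.sqrt (Real.exp (-x) * x^l))
            * (Real.sqrt (Real.exp (-x) * x^l) / Real.sqrt (l.factorial:ℝ)))^2 := by
          rw [hUdef]
          congr 1
          exact Finset.sum_congr rfl hfw
      _ ≤ (∑ l ∈ range (L+1),
            (|a l| * Real.sqrt (l.factorial:ℝ) * Real.sqrt (Real.exp (-x) * x^l))^2)
          * (∑ l ∈ range (L+1),
            (Real.sqrt (Real.exp (-x) * x^l) / Real.sqrt (l.factorial:ℝ))^2) :=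
          Finset.sum_mul_sq_le_sq_mul_sq _ _ _
      _ = S * T := by
          congr 1
          · apply Finset.sum_congr rfl
            intro l _
            have hfac : (0:ℝ) ≤ (l.factorial:ℝ) := by positivity
            rw [mul_pow, mul_pow, sq_abs, Real.sq_sqrt hfac,
              Real.sq_sqrt (by positivity : (0:ℝ) ≤ Real.exp (-x) * x^l)]
          · apply Finset.sum_congr rfl
            intro l _
            have hfac : (0:ℝ) ≤ (l.factorial:ℝ) := by positivity
            rw [div_pow, Real.sq_sqrt hfac,
              Real.sq_sqrt (by positivity : (0:ℝ) ≤ Real.exp (-x) * x^l)]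
  -- T bound
  have hTb : T ≤ 13/11 * (Real.exp (-x) * x^L / (L.factorial:ℝ)) := by
    have hterm : ∀ l ∈ range (L+1),
        (Real.exp (-x) * x^l) / (l.factorial:ℝ)
          ≤ (Real.exp (-x) * x^L / (L.factorial:ℝ)) * (2/13)^(L-l) := by
      intro l hl
      have hlL : l ≤ L := Nat.lt_succ_iff.mp (Finset.mem_range.mp hl)
      have hfacl : (0:ℝ) < (l.factorial:ℝ) := by exact_mod_cast l.factorial_pos
      have hfacL : (0:ℝ) < (L.factorial:ℝ) := by exact_mod_cast L.factorial_pos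
      have hkey : (L.factorial:ℝ) ≤ (l.factorial:ℝ) * (2/13*x)^(L-l) := by
        have h1 := fact_le_pow l (L-l)
        rw [Nat.add_sub_cancel' hlL] at h1
        have h1' : (L.factorial:ℝ) ≤ (l.factorial:ℝ) * (L:ℝ)^(L-l) := by exact_mod_cast h1
        refine h1'.trans ?_
        apply mul_le_mul_of_nonneg_left _ hfacl.le
        exact pow_le_pow_left₀ (by positivity) hLx (L-l)
      have h3 : (1:ℝ)/(l.factorial:ℝ) ≤ (2/13*x)^(L-l)/(L.factorial:ℝ) := by
        rw [div_le_div_iff₀ hfacl hfacL]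
        nlinarith [hkey, hfacl]
      have hxL : x^L = x^l * x^(L-l) := by
        rw [← pow_add, Nat.add_sub_cancel' hlL]
      calc (Real.exp (-x) * x^l) / (l.factorial:ℝ)
          = (Real.exp (-x) * x^l) * (1/(l.factorial:ℝ)) := by ring
        _ ≤ (Real.exp (-x) * x^l) * ((2/13*x)^(L-l)/(L.factorial:ℝ)) :=
            mul_le_mul_of_nonneg_left h3 (by positivity)
        _ = (Real.exp (-x) * x^L / (L.factorial:ℝ)) * (2/13)^(L-l) := by
            rw [hxL, mul_pow]; ring
    have hgeom : ∑ l ∈ range (L+1), ((2:ℝ)/13)^(L-l) ≤ 13/11 := by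
      have hre : ∑ l ∈ range (L+1), ((2:ℝ)/13)^(L-l)
          = ∑ j ∈ range (L+1), ((2:ℝ)/13)^j := by
        have := Finset.sum_range_reflect (fun j => ((2:ℝ)/13)^j) (L+1)
        simpa using this
      rw [hre, geom_sum_eq (by norm_num : ((2:ℝ)/13) ≠ 1)]
      rw [div_le_iff_of_neg (by norm_num : ((2:ℝ)/13) - 1 < 0)]
      have : (0:ℝ) ≤ (2/13:ℝ)^(L+1) := by positivity
      nlinarith
    calc T ≤ ∑ l ∈ range (L+1),
          (Real.exp (-x) * x^L / (L.factorial:ℝ)) * (2/13)^(L-l) :=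
          Finset.sum_le_sum hterm
      _ = (Real.exp (-x) * x^L / (L.factorial:ℝ))
            * ∑ l ∈ range (L+1), ((2:ℝ)/13)^(L-l) := by rw [Finset.mul_sum]
      _ ≤ (Real.exp (-x) * x^L / (L.factorial:ℝ)) * (13/11) :=
          mul_le_mul_of_nonneg_left hgeom (by positivity)
      _ = 13/11 * (Real.exp (-x) * x^L / (L.factorial:ℝ)) := by ring
  -- tail bound
  have htail : Real.exp (-x) * x^L / (L.factorial:ℝ) ≤ (121/338)/k := by
    have hfacL : (0:ℝ) < (L.factorial:ℝ) := by exact_mod_cast L.factorial_pos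
    set y := 13/2*(L:ℝ) with hy
    have hy0 : 0 < y := by rw [hy]; nlinarith
    have hyx : y ≤ x := hx
    have hLy : (L:ℝ) ≤ y := by rw [hy]; nlinarith
    have hmono : x^L * Real.exp (-x) ≤ y^L * Real.exp (-y) := by
      have h1 : x/y ≤ Real.exp ((x-y)/y) := by
        have h := Real.add_one_le_exp ((x-y)/y)
        have : x/y = (x-y)/y + 1 := by field_simp; ring
        linarith
      have h2 : (x/y)^L ≤ Real.exp ((x-y)/y)^L :=
        pow_le_pow_left₀ (by positivity) h1 L
      have h3 : Real.exp ((x-y)/y)^L = Real.exp ((L:ℝ)*((x-y)/y)) :=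
        (Real.exp_nat_mul _ L).symm
      have hyy : y*((x-y)/y) = x - y := by field_simp
      have h4 : (L:ℝ)*((x-y)/y) ≤ x - y := by
        have hfrac : 0 ≤ (x-y)/y := by
          apply div_nonneg _ hy0.le; linarith
        nlinarith [hLy, hfrac, hyy]
      have h5 : (x/y)^L ≤ Real.exp (x-y) := by
        rw [h3] at h2
        exact h2.trans (Real.exp_le_exp.mpr h4)
      calc x^L * Real.exp (-x) = ((x/y)^L * Real.exp (-x)) * y^L := by
            rw [div_pow]; field_simp
        _ ≤ (Real.exp (x-y) * Real.exp (-x)) * y^L := by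
            apply mul_le_mul_of_nonneg_right _ (by positivity)
            exact mul_le_mul_of_nonneg_right h5 epos.le
        _ = y^L * Real.exp (-y) := by
            rw [← Real.exp_add]; ring_nf
    have hexpy : Real.exp (-y) ≤ (1/660)^L := by
      have h1 : Real.exp y = Real.exp (13/2)^L := by
        rw [← Real.exp_nat_mul]; congr 1; rw [hy]; ring
      have h2 : (660:ℝ)^L ≤ Real.exp y := by
        rw [h1]; exact pow_le_pow_left₀ (by norm_num) exp_half13 L
      rw [Real.exp_neg]
      have h660 : (0:ℝ) < (660:ℝ)^L := by positivity
      calc (Real.exp y)⁻¹ ≤ ((660:ℝ)^L)⁻¹ := by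
            apply inv_anti₀ h660 h2
        _ = (1/660)^L := by rw [one_div, inv_pow]
    have hchain : 338 * k * (x^L * Real.exp (-x)) ≤ 121 * (L.factorial:ℝ) := by
      have hc1 : 338 * k * (x^L * Real.exp (-x))
          ≤ 338 * (6.02:ℝ)^(L+1) * (y^L * (1/660)^L) := by
        have hA : x^L * Real.exp (-x) ≤ y^L * (1/660)^L := by
          refine hmono.trans ?_
          exact mul_le_mul_of_nonneg_left hexpy (by positivity)
        have hA0 : 0 ≤ x^L * Real.exp (-x) := by positivity
        have hk60 : (0:ℝ) ≤ 6.02^(L+1) := by positivity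
        calc 338 * k * (x^L * Real.exp (-x))
            ≤ 338 * (6.02:ℝ)^(L+1) * (x^L * Real.exp (-x)) := by
              apply mul_le_mul_of_nonneg_right _ hA0
              nlinarith [hk6]
          _ ≤ 338 * (6.02:ℝ)^(L+1) * (y^L * (1/660)^L) := by
              apply mul_le_mul_of_nonneg_left hA (by positivity)
      refine hc1.trans ?_
      have hkey := key_ind L hL1
      have h660 : (0:ℝ) < (660:ℝ)^L := by positivity
      have h2 : 338 * (6.02:ℝ)^(L+1) * (y^L * (1/660)^L) * 660^L
          = 338 * ((13/2)*(L:ℝ))^L * 6.02^(L+1) := by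
        rw [hy, one_div, inv_pow]
        field_simp
      have h3 : 338 * (6.02:ℝ)^(L+1) * (y^L * (1/660)^L) * 660^L
          ≤ (121 * (L.factorial:ℝ)) * 660^L := by
        rw [h2]; linarith [hkey]
      exact le_of_mul_le_mul_right h3 h660
    rw [div_le_div_iff₀ hfacL hk0]
    nlinarith [hchain, epos, hfacL]
  -- assembly
  rw [(hasDerivAt_g k L a x).deriv, ← hQdef]
  have hterm2 : 2 * (Real.exp (-x) * P L a x) * (Real.exp (-x) * (Q - P L a x))
      ≤ (1/k) * ((11/13) * S) := by
    have habsmul : (Real.exp (-x) * P L a x) * (Real.exp (-x) * (Q - P L a x)) ≤ U * U := by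
      calc (Real.exp (-x) * P L a x) * (Real.exp (-x) * (Q - P L a x))
          ≤ |(Real.exp (-x) * P L a x) * (Real.exp (-x) * (Q - P L a x))| := le_abs_self _
        _ = |Real.exp (-x) * P L a x| * |Real.exp (-x) * (Q - P L a x)| := abs_mul _ _
        _ ≤ U * U := mul_le_mul hEP hEQ (abs_nonneg _) hU0
    have hU2 : U * U ≤ S * T := by nlinarith [hCS]
    have hT2 : S * T ≤ S * (13/11 * ((121/338)/k)) := by
      apply mul_le_mul_of_nonneg_left _ hS0
      exact hTb.trans (mul_le_mul_of_nonneg_left htail (by norm_num))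
    have heq : 2*(S*(13/11 * ((121/338)/k))) = (1/k)*((11/13)*S) := by
      field_simp
      ring
    nlinarith [habsmul, hU2, hT2, heq]
  have hzero : (1/k) * (-(11/13) * S) + (1/k) * ((11/13) * S) = 0 := by ring
  linarith [hpart1, hterm2]

lemma g_cont (k : ℝ) (L : ℕ) (a : ℕ → ℝ) : Continuous (g k L a) := by
  unfold g P
  fun_prop

lemma g_anti (k : ℝ) (hk0 : 0 < k) (L : ℕ) (hL1 : 1 ≤ L)
    (hk6 : k ≤ 6.02^(L+1)) (a : ℕ → ℝ) :
    AntitoneOn (g k L a) (Set.Ici ((13:ℝ)/2 * L)) := by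
  apply antitoneOn_of_deriv_nonpos (convex_Ici _)
    ((g_cont k L a).continuousOn)
  · intro x _
    exact (hasDerivAt_g k L a x).differentiableAt.differentiableWithinAt
  · intro x hx
    rw [interior_Ici] at hx
    exact deriv_g_nonpos k hk0 L hL1 hk6 a x (le_of_lt hx)

theorem stmt_0 (k n : ℝ) (hk : 0 < k) (hn : 0 < n) (L : ℕ) (hL1 : 1 ≤ L)
    (hLdef : (L : ℤ) = ⌊(0.558 : ℝ) * Real.log k⌋)
    (a : ℕ → ℝ) (ha0 : a 0 = -1) :
    (n / k ≤ 6.5 * L → 6.5 * L ≤ n →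
      sSup (g k L a '' Set.Icc (n / k) n)
        = sSup (g k L a '' Set.Icc (n / k) (6.5 * L))) ∧
    (6.5 * L < n / k →
      sSup (g k L a '' Set.Icc (n / k) n) = g k L a (n / k)) := by
  have hL0 : (1:ℝ) ≤ (L:ℝ) := by exact_mod_cast hL1
  -- floor consequences
  have hfl : ((L:ℝ)) ≤ 0.558 * Real.log k := by
    have h1 : ((⌊(0.558 : ℝ) * Real.log k⌋ : ℤ) : ℝ) ≤ 0.558 * Real.log k :=
      Int.floor_le _
    rw [← hLdef] at h1
    exact_mod_cast h1
  have hfu : 0.558 * Real.log k < (L:ℝ) + 1 := by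
    have h1 : 0.558 * Real.log k < ((⌊(0.558 : ℝ) * Real.log k⌋ : ℤ) : ℝ) + 1 :=
      Int.lt_floor_add_one _
    rw [← hLdef] at h1
    exact_mod_cast h1
  have hlogk : 0 < Real.log k := by nlinarith
  have hk1 : (1:ℝ) ≤ k := by
    by_contra h
    push_neg at h
    have := Real.log_neg hk h
    linarith
  have hk6 : k ≤ 6.02^(L+1) := by
    have h1 : Real.log k < ((L:ℝ)+1) * (500/279) := by nlinarith
    have h2 : k = Real.exp (Real.log k) := (Real.exp_log hk).symm
    have h3 : Real.exp (((L:ℝ)+1) * (500/279)) = Real.exp (500/279)^(L+1) := by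
      rw [← Real.exp_nat_mul]
      congr 1
      push_cast
      ring
    calc k = Real.exp (Real.log k) := h2
      _ ≤ Real.exp (((L:ℝ)+1) * (500/279)) := Real.exp_le_exp.mpr h1.le
      _ = Real.exp (500/279)^(L+1) := h3
      _ ≤ 6.02^(L+1) := pow_le_pow_left₀ (Real.exp_pos _).le exp_ratio (L+1)
  have hanti := g_anti k hk L hL1 hk6 a
  have h65 : (6.5:ℝ) * L = 13/2 * L := by norm_num
  have hnk : n / k ≤ n := div_le_self hn.le hk1
  constructor
  · -- case (i)
    intro h1 h2
    have hsplit : Set.Icc (n/k) n = Set.Icc (n/k) (6.5*L) ∪ Set.Icc (6.5*L) n :=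
      (Set.Icc_union_Icc_eq_Icc h1 h2).symm
    have hb1 : BddAbove (g k L a '' Set.Icc (n/k) (6.5*L)) :=
      (isCompact_Icc.image (g_cont k L a)).bddAbove
    have hb2 : BddAbove (g k L a '' Set.Icc (6.5*L) n) :=
      (isCompact_Icc.image (g_cont k L a)).bddAbove
    have hne1 : (g k L a '' Set.Icc (n/k) (6.5*L)).Nonempty :=
      (Set.nonempty_Icc.mpr h1).image _
    have hne2 : (g k L a '' Set.Icc (6.5*L) n).Nonempty :=
      (Set.nonempty_Icc.mpr h2).image _
    rw [hsplit, Set.image_union, csSup_union hb1 hne1 hb2 hne2]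
    have hgr : IsGreatest (g k L a '' Set.Icc (6.5*L) n) (g k L a (6.5*L)) := by
      constructor
      · exact ⟨6.5*L, ⟨le_refl _, h2⟩, rfl⟩
      · rintro y ⟨t, ⟨ht1, ht2⟩, rfl⟩
        exact hanti (by rw [Set.mem_Ici, ← h65])
          (by rw [Set.mem_Ici, ← h65]; exact ht1) ht1
    have hsup2 : sSup (g k L a '' Set.Icc (6.5*L) n) = g k L a (6.5*L) :=
      hgr.csSup_eq
    rw [hsup2]
    have hle : g k L a (6.5*L) ≤ sSup (g k L a '' Set.Icc (n/k) (6.5*L)) :=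
      le_csSup hb1 ⟨6.5*L, ⟨h1, le_refl _⟩, rfl⟩
    exact sup_eq_left.mpr hle
  · -- case (ii)
    intro hlt
    apply IsGreatest.csSup_eq
    constructor
    · exact ⟨n/k, ⟨le_refl _, hnk⟩, rfl⟩
    · rintro y ⟨t, ⟨ht1, ht2⟩, rfl⟩
      refine hanti ?_ ?_ ht1
      · rw [Set.mem_Ici, ← h65]; exact hlt.le
      · rw [Set.mem_Ici, ← h65]; exact hlt.le.trans ht1
end

section
/- Let c0 = 0.558, let L ∈ ℕ with L ≥ 1, let k > 0 be a real number with log k ≤ (L+1)/c0, and let λ ≥ 6.5·L. Then the (L+1)×(L+1) real symmetric matrix (e^{λ}/k)·D + 1·zᵀ + z·1ᵀ is negative definite, where z ∈ ℝ^{L+1} has entries z_i = i/λ − 1 (i = 0, …, L), 1 ∈ ℝ^{L+1} is the all-ones vector, and D is the diagonal matrix with D_{ii} = (i/λ − 1)·i!/λ^i. -/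
/-!
With `c = eˣ / k`, `aᵢ = i / x - 1` and `dᵢ = aᵢ i! / xⁱ`, the quadratic form is
`c ∑ dᵢ yᵢ² + 2 (∑ yᵢ) (∑ aᵢ yᵢ)`. Since `i / x ≤ 2 / 13` and `i! / xⁱ` decreases for `i ≤ x`,
every `dᵢ ≤ -(11 / 13) L! / xᴸ`; by `2 s t ≤ (s + t)² / 2` and Cauchy–Schwarz the rank-two part
is at most `(L + 1) (2 / 13)² / 2 · ‖y‖²`. So it suffices that `(L + 1) k xᴸ < 71.5 eˣ L!`
(`71.5 = 2 · 5.5 · 6.5`), which follows from `k ≤ e^((L + 1) / 0.558)`, the monotonicity of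
`t ↦ tᴸ e⁻ᵗ` on `[L, ∞)`, and `Lᴸ ≤ eᴸ L!`.
-/

open Matrix Finset
open scoped Nat

lemma dotProduct_smul_diagonal_add_vecMulVec_mulVec {R n : Type*} [CommRing R] [Fintype n]
    [DecidableEq n] (c : R) (d u a y : n → R) :
    y ⬝ᵥ ((c • diagonal d + (vecMulVec u a + vecMulVec a u)) *ᵥ y) =
      c * ∑ i, d i * y i ^ 2 + 2 * (u ⬝ᵥ y) * (a ⬝ᵥ y) := by
  have hdiag : y ⬝ᵥ (diagonal d *ᵥ y) = ∑ i, d i * y i ^ 2 := by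
    simp only [dotProduct, mulVec_diagonal]
    exact sum_congr rfl fun i _ => by ring
  simp only [add_mulVec, smul_mulVec, vecMulVec_mulVec, dotProduct_add, dotProduct_smul,
    op_smul_eq_smul, smul_eq_mul, hdiag, dotProduct_comm y u, dotProduct_comm y a]
  ring

lemma dotProduct_smul_diagonal_add_vecMulVec_mulVec_neg {n : Type*} [Fintype n] [DecidableEq n]
    {c δ : ℝ} {d u a : n → ℝ} (hc : 0 ≤ c) (hd : ∀ i, d i ≤ -δ)
    (hδ : (∑ i, (u i + a i) ^ 2) / 2 < c * δ) {y : n → ℝ} (hy : y ≠ 0) :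
    y ⬝ᵥ ((c • diagonal d + (vecMulVec u a + vecMulVec a u)) *ᵥ y) < 0 := by
  rw [dotProduct_smul_diagonal_add_vecMulVec_mulVec]
  have hY : 0 < ∑ i, y i ^ 2 := by
    obtain ⟨i, hi⟩ := Function.ne_iff.mp hy
    exact sum_pos' (fun j _ => sq_nonneg (y j)) ⟨i, mem_univ i, sq_pos_of_ne_zero hi⟩
  have hdiag : ∑ i, d i * y i ^ 2 ≤ -δ * ∑ i, y i ^ 2 := by
    rw [mul_sum]
    exact sum_le_sum fun i _ => mul_le_mul_of_nonneg_right (hd i) (sq_nonneg (y i))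
  have hamgm : 2 * (u ⬝ᵥ y) * (a ⬝ᵥ y) ≤ ((u + a) ⬝ᵥ y) ^ 2 / 2 := by
    rw [add_dotProduct]
    nlinarith [sq_nonneg (u ⬝ᵥ y - a ⬝ᵥ y)]
  have hcs : ((u + a) ⬝ᵥ y) ^ 2 ≤ (∑ i, (u i + a i) ^ 2) * ∑ i, y i ^ 2 :=
    sum_mul_sq_le_sq_mul_sq _ _ _
  nlinarith [mul_le_mul_of_nonneg_left hdiag hc, mul_lt_mul_of_pos_right hδ hY]

lemma factorial_div_pow_le_factorial_div_pow {i n : ℕ} (hin : i ≤ n) {x : ℝ} (hx : 0 < x)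
    (hnx : n ≤ x) : (n ! : ℝ) / x ^ n ≤ i ! / x ^ i := by
  rw [div_le_div_iff₀ (by positivity) (by positivity)]
  have hfac : (n ! : ℝ) ≤ i ! * n ^ (n - i) := by
    have := Nat.factorial_mul_descFactorial (Nat.sub_le n i)
    rw [Nat.sub_sub_self hin] at this
    rw [← this]
    push_cast
    gcongr
    exact_mod_cast Nat.descFactorial_le_pow n (n - i)
  calc (n ! : ℝ) * x ^ i ≤ i ! * x ^ (n - i) * x ^ i := by
        gcongr
        exact hfac.trans (by gcongr)
    _ = i ! * x ^ n := by rw [mul_assoc, ← pow_add, Nat.sub_add_cancel hin]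

lemma div_sub_one_mul_factorial_div_pow_le {i n : ℕ} (hin : i ≤ n) {x r : ℝ} (hx : 0 < x)
    (hnx : n ≤ x) (hr : i / x ≤ r) (hr1 : r ≤ 1) :
    (i / x - 1) * i ! / x ^ i ≤ -((1 - r) * (n ! / x ^ n)) := by
  rw [mul_div_assoc, neg_mul_eq_neg_mul, neg_sub]
  calc (i / x - 1) * (i ! / x ^ i) ≤ (i / x - 1) * (n ! / x ^ n) :=
        mul_le_mul_of_nonpos_left (factorial_div_pow_le_factorial_div_pow hin hx hnx)
          (by linarith)
    _ ≤ (r - 1) * (n ! / x ^ n) := by gcongr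

/-- `t ↦ tⁿ e⁻ᵗ` is decreasing on `[n, ∞)`. -/
lemma pow_le_pow_mul_exp_sub (n : ℕ) {a x : ℝ} (ha : 0 < a) (hna : n ≤ a) (hax : a ≤ x) :
    x ^ n ≤ a ^ n * Real.exp (x - a) := by
  have hpow : (x / a) ^ n ≤ Real.exp (x - a) := calc
    (x / a) ^ n ≤ Real.exp (x / a - 1) ^ n := by
      gcongr
      · exact div_nonneg (ha.le.trans hax) ha.le
      · linarith [Real.add_one_le_exp (x / a - 1)]
    _ = Real.exp (n * (x / a - 1)) := by rw [← Real.exp_nat_mul]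
    _ ≤ Real.exp (x - a) := by
      gcongr
      calc (n : ℝ) * (x / a - 1) ≤ a * (x / a - 1) := by
            gcongr
            rw [sub_nonneg, one_le_div ha]
            exact hax
        _ = x - a := by field_simp
  rwa [div_pow, div_le_iff₀ (by positivity), mul_comm] at hpow

lemma add_one_mul_pow_mul_exp_lt (L : ℕ) :
    (L + 1) * 6.5 ^ L * Real.exp ((L + 1) / 0.558) < 71.5 * Real.exp (5.5 * L) := by
  have h65 : (6.5 : ℝ) ≤ Real.exp 2 := by
    rw [show (2 : ℝ) = 1 + 1 by norm_num, Real.exp_add]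
    nlinarith [Real.exp_one_gt_d9]
  have he2 : Real.exp 2 < 71.5 := by
    rw [show (2 : ℝ) = 1 + 1 by norm_num, Real.exp_add]
    nlinarith [Real.exp_one_lt_three, Real.exp_pos 1]
  have hL : (0 : ℝ) ≤ L := L.cast_nonneg
  calc (L + 1) * 6.5 ^ L * Real.exp ((L + 1) / 0.558)
      ≤ Real.exp L * Real.exp 2 ^ L * Real.exp ((L + 1) / 0.558) := by
        gcongr
        linarith [Real.add_one_le_exp L]
    _ = Real.exp (3 * L + (L + 1) / 0.558 - 5.5 * L) * Real.exp (5.5 * L) := by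
        rw [← Real.exp_nat_mul, ← Real.exp_add, ← Real.exp_add, ← Real.exp_add]
        ring_nf
    _ < 71.5 * Real.exp (5.5 * L) := by
        gcongr
        refine lt_of_le_of_lt (Real.exp_le_exp.mpr ?_) he2
        norm_num
        linarith

lemma add_one_mul_mul_pow_lt_exp_mul_factorial {L : ℕ} (hL : 1 ≤ L) {k x : ℝ} (hk : 0 < k)
    (hlogk : Real.log k ≤ ((L : ℝ) + 1) / 0.558) (hx : 6.5 * L ≤ x) :
    (L + 1) * k * x ^ L < 71.5 * (Real.exp x * L !) := by
  have hL' : (1 : ℝ) ≤ L := by exact_mod_cast hL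
  have hx0 : 0 < x := by linarith
  have hk' : k ≤ Real.exp ((L + 1) / 0.558) := (Real.log_le_iff_le_exp hk).mp hlogk
  have hxL : x ^ L ≤ (6.5 * L) ^ L * Real.exp (x - 6.5 * L) :=
    pow_le_pow_mul_exp_sub L (by positivity) (by linarith) hx
  have hLL : (L : ℝ) ^ L ≤ Real.exp L * L ! := by
    have := Real.pow_div_factorial_le_exp (x := L) L.cast_nonneg L
    rwa [div_le_iff₀ (by positivity)] at this
  calc (L + 1) * k * x ^ L
      ≤ (L + 1) * Real.exp ((L + 1) / 0.558) * ((6.5 * L) ^ L * Real.exp (x - 6.5 * L)) := by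
        gcongr
    _ = (L + 1) * 6.5 ^ L * Real.exp ((L + 1) / 0.558) * L ^ L * Real.exp (x - 6.5 * L) := by
        rw [mul_pow]
        ring
    _ ≤ (L + 1) * 6.5 ^ L * Real.exp ((L + 1) / 0.558) * (Real.exp L * L !) *
          Real.exp (x - 6.5 * L) := by
        gcongr
    _ < 71.5 * Real.exp (5.5 * L) * (Real.exp L * L !) * Real.exp (x - 6.5 * L) := by
        gcongr ?_ * _ * _
        exact add_one_mul_pow_mul_exp_lt L
    _ = 71.5 * (Real.exp x * L !) := by
        have hexp : Real.exp x = Real.exp (5.5 * L) * Real.exp L * Real.exp (x - 6.5 * L) := by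
          rw [← Real.exp_add, ← Real.exp_add]
          ring_nf
        rw [hexp]
        ring

theorem stmt_4 (L : ℕ) (hL : 1 ≤ L) (k : ℝ) (hk : 0 < k)
    (hlogk : Real.log k ≤ ((L : ℝ) + 1) / 0.558)
    (x : ℝ) (hx : 6.5 * L ≤ x) :
    ∀ y : Fin (L + 1) → ℝ, y ≠ 0 →
      dotProduct y
        (Matrix.mulVec
          ((Real.exp x / k) •
              Matrix.diagonal
                (fun i : Fin (L + 1) =>
                  (((i : ℕ) : ℝ) / x - 1) * ((i : ℕ).factorial : ℝ) / x ^ (i : ℕ)) +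
            (Matrix.vecMulVec (fun _ : Fin (L + 1) => (1 : ℝ))
                (fun i : Fin (L + 1) => ((i : ℕ) : ℝ) / x - 1) +
              Matrix.vecMulVec (fun i : Fin (L + 1) => ((i : ℕ) : ℝ) / x - 1)
                (fun _ : Fin (L + 1) => (1 : ℝ))))
          y) < 0 := by
  intro y hy
  have hL' : (1 : ℝ) ≤ L := by exact_mod_cast hL
  have hx0 : 0 < x := by linarith
  have hratio (i : Fin (L + 1)) : ((i : ℕ) : ℝ) / x ≤ 2 / 13 := by
    have : ((i : ℕ) : ℝ) ≤ L := by exact_mod_cast Fin.is_le i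
    rw [div_le_iff₀ hx0]
    linarith
  refine dotProduct_smul_diagonal_add_vecMulVec_mulVec_neg (δ := (1 - 2 / 13) * (L ! / x ^ L))
    (by positivity) (fun i => ?_) ?_ hy
  · exact div_sub_one_mul_factorial_div_pow_le (Fin.is_le i) hx0 (by linarith) (hratio i)
      (by norm_num)
  · have hsum : ∑ i : Fin (L + 1), (1 + (((i : ℕ) : ℝ) / x - 1)) ^ 2 ≤ ((L : ℝ) + 1) * (2 / 13) ^ 2 :=
      calc _ = ∑ i : Fin (L + 1), (((i : ℕ) : ℝ) / x) ^ 2 := by simp only [add_sub_cancel]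
        _ ≤ ∑ _i : Fin (L + 1), (2 / 13 : ℝ) ^ 2 :=
          sum_le_sum fun i _ => pow_le_pow_left₀ (by positivity) (hratio i) 2
        _ = ((L : ℝ) + 1) * (2 / 13) ^ 2 := by simp
    have key := add_one_mul_mul_pow_lt_exp_mul_factorial hL hk hlogk hx
    rw [show Real.exp x / k * ((1 - 2 / 13) * (L ! / x ^ L)) =
        11 / 13 * (Real.exp x * L !) / (k * x ^ L) by
      field_simp; norm_num, lt_div_iff₀ (by positivity)]
    nlinarith [mul_le_mul_of_nonneg_right hsum (by positivity : (0 : ℝ) ≤ k * x ^ L)]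
end

section
/- Let L ∈ ℕ and let λ > L be a real number. Let z ∈ ℝ^{L+1} have entries z_i = i/λ − 1 for i = 0, …, L and let 1 ∈ ℝ^{L+1} be the all-ones vector. Then every eigenvalue of the real symmetric (L+1)×(L+1) matrix B = 1·zᵀ + z·1ᵀ is at most L(L+1)/(2λ). -/
/-!
For an eigenvector `v` of `B = u wᵀ + w uᵀ`, the Rayleigh quotient gives
`μ ‖v‖² = 2 (u ⬝ v)(w ⬝ v)`, and `4 (u ⬝ v)(w ⬝ v) ≤ ((u + w) ⬝ v)² ≤ ‖u + w‖² ‖v‖²`.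
Hence `μ ≤ u ⬝ w + (‖u‖² + ‖w‖²) / 2`. For `u = 1` and `w = z` we have `‖u‖² = L + 1`,
`‖z‖² ≤ L + 1` because `-1 ≤ z_i < 0`, and `1 ⬝ z = L(L+1)/(2λ) - (L + 1)`.
-/

open Matrix Finset

section RankTwo

variable {n 𝕜 : Type*} [Fintype n]

lemma dotProduct_vecMulVec_add_vecMulVec_mulVec [CommRing 𝕜] (u w v : n → 𝕜) :
    v ⬝ᵥ ((vecMulVec u w + vecMulVec w u) *ᵥ v) = 2 * (u ⬝ᵥ v) * (w ⬝ᵥ v) := by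
  simp only [dotProduct_comm v, add_mulVec, vecMulVec_mulVec, op_smul_eq_smul, add_dotProduct,
    smul_dotProduct, smul_eq_mul]
  ring

variable [Field 𝕜] [LinearOrder 𝕜] [IsStrictOrderedRing 𝕜]

lemma four_mul_dotProduct_mul_dotProduct_le (u w v : n → 𝕜) :
    4 * (u ⬝ᵥ v) * (w ⬝ᵥ v) ≤ ((u + w) ⬝ᵥ (u + w)) * (v ⬝ᵥ v) :=
  calc 4 * (u ⬝ᵥ v) * (w ⬝ᵥ v) ≤ ((u + w) ⬝ᵥ v) ^ 2 := by
        rw [add_dotProduct]; nlinarith [sq_nonneg (u ⬝ᵥ v - w ⬝ᵥ v)]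
    _ ≤ ((u + w) ⬝ᵥ (u + w)) * (v ⬝ᵥ v) := by
        simpa only [dotProduct, ← sq] using sum_mul_sq_le_sq_mul_sq univ (u + w) v

/-- The exact bound is `u ⬝ᵥ w + ‖u‖ ‖w‖`; this is its AM-GM weakening, free of square roots. -/
theorem le_of_hasEigenvalue_vecMulVec_add_vecMulVec [DecidableEq n] {u w : n → 𝕜} {μ : 𝕜}
    (hμ : Module.End.HasEigenvalue (toLin' (vecMulVec u w + vecMulVec w u)) μ) :
    μ ≤ u ⬝ᵥ w + (u ⬝ᵥ u + w ⬝ᵥ w) / 2 := by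
  obtain ⟨v, hv⟩ := hμ.exists_hasEigenvector
  have hvv : 0 < v ⬝ᵥ v :=
    (sum_nonneg fun i _ => mul_self_nonneg (v i)).lt_of_ne' (dotProduct_self_eq_zero.not.mpr hv.2)
  have hrayleigh : μ * (v ⬝ᵥ v) = 2 * (u ⬝ᵥ v) * (w ⬝ᵥ v) := by
    rw [← dotProduct_vecMulVec_add_vecMulVec_mulVec, ← toLin'_apply, hv.apply_eq_smul,
      dotProduct_smul, smul_eq_mul, dotProduct_comm]
  have hnorm : (u + w) ⬝ᵥ (u + w) = u ⬝ᵥ u + 2 * (u ⬝ᵥ w) + w ⬝ᵥ w := by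
    simp only [add_dotProduct, dotProduct_add, dotProduct_comm w u]
    ring
  have hcs := four_mul_dotProduct_mul_dotProduct_le u w v
  rw [hnorm] at hcs
  refine le_of_mul_le_mul_right ?_ hvv
  nlinarith

end RankTwo

lemma Fin.sum_univ_val_cast {K : Type*} [Field K] [CharZero K] (n : ℕ) :
    ∑ i : Fin (n + 1), ((i : ℕ) : K) = n * (n + 1) / 2 := by
  rw [Fin.sum_univ_eq_sum_range (fun i => (i : K)), eq_div_iff two_ne_zero, ← Nat.cast_sum]
  have h := sum_range_id_mul_two (n + 1)
  rw [Nat.add_sub_cancel] at h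
  exact_mod_cast h.trans (Nat.mul_comm _ _)

theorem stmt_6 (L : ℕ) (x : ℝ) (hx : (L : ℝ) < x) :
    ∀ μ : ℝ,
      Module.End.HasEigenvalue
        (Matrix.toLin'
          (Matrix.vecMulVec (fun _ : Fin (L + 1) => (1 : ℝ))
              (fun i : Fin (L + 1) => ((i : ℕ) : ℝ) / x - 1) +
            Matrix.vecMulVec (fun i : Fin (L + 1) => ((i : ℕ) : ℝ) / x - 1)
              (fun _ : Fin (L + 1) => (1 : ℝ)))) μ →
      μ ≤ (L : ℝ) * ((L : ℝ) + 1) / (2 * x) := by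
  intro μ hμ
  set z : Fin (L + 1) → ℝ := fun i => ((i : ℕ) : ℝ) / x - 1
  have hx0 : 0 < x := (Nat.cast_nonneg L).trans_lt hx
  have hone : (fun _ => (1 : ℝ)) ⬝ᵥ (fun _ : Fin (L + 1) => (1 : ℝ)) = L + 1 := by
    simp [dotProduct]
  have hsum : (fun _ => (1 : ℝ)) ⬝ᵥ z = L * (L + 1) / (2 * x) - (L + 1) := by
    simp only [dotProduct, one_mul, z, sum_sub_distrib, ← sum_div, Fin.sum_univ_val_cast, sum_const,
      card_univ, Fintype.card_fin, nsmul_eq_mul, Nat.cast_add, Nat.cast_one, mul_one, sub_left_inj]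
    field_simp
  have hz : z ⬝ᵥ z ≤ L + 1 :=
    calc z ⬝ᵥ z ≤ ∑ _i : Fin (L + 1), (1 : ℝ) := by
          refine sum_le_sum fun i _ => ?_
          have hle : ((i : ℕ) : ℝ) / x ≤ 1 :=
            (div_le_one hx0).mpr ((Nat.cast_le.mpr i.is_le).trans hx.le)
          have hnonneg := div_nonneg (Nat.cast_nonneg (i : ℕ)) hx0.le
          simp only [z]
          nlinarith
      _ = L + 1 := by simp
  have hμle := le_of_hasEigenvalue_vecMulVec_add_vecMulVec hμ
  rw [hone, hsum] at hμle
  linarith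
end

section
/- Let c0 = 0.558, let L ∈ ℕ with L ≥ 1, and let k > 0 be a real number with log k ≤ (L+1)/c0. Then for every real λ ≥ 6.5·L: −(e^{λ}/(2k))·(L/(e·λ))^L + L(L+1)/(2λ) < 0. -/
/-!
Taking logarithms, the claim is
`log L + log (L+1) - log λ < λ - log k + L (log L - 1 - log λ)`.
Writing `λ = 6.5 L t` with `t ≥ 1`, the `L log L` terms cancel and only
`log (L+1) + log k + L + (L-1)(log 6.5 + log t) < 6.5 L t` remains, which follows from
`log (L+1) ≤ L`, `log k ≤ 1.793 (L+1)`, `log 6.5 ≤ 2` and `log t ≤ t - 1`.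
-/

open Real

lemma log_six_point_five_le_two : log 6.5 ≤ 2 := by
  rw [log_le_iff_le_exp (by norm_num), show (2 : ℝ) = 1 + 1 by norm_num, exp_add]
  nlinarith [exp_one_gt_d9]

lemma log_exp_div_mul_div_pow {k x a : ℝ} (hk : 0 < k) (hx : 0 < x) (ha : 0 < a) (n : ℕ) :
    log (exp x / (2 * k) * (a / (exp 1 * x)) ^ n)
      = x - log (2 * k) + n * (log a - 1 - log x) := by
  rw [log_mul (by positivity) (by positivity), log_div (by positivity) (by positivity), log_exp,
    log_pow, log_div ha.ne' (by positivity), log_mul (by positivity) hx.ne', log_exp]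
  ring

lemma log_mul_succ_sub_log_lt {a k x : ℝ} (ha : 1 ≤ a) (hlogk : log k ≤ (a + 1) / 0.558)
    (hx : 6.5 * a ≤ x) :
    log a + log (a + 1) - log x < x - log k + a * (log a - 1 - log x) := by
  obtain ⟨t, ht, rfl⟩ : ∃ t : ℝ, 1 ≤ t ∧ x = 6.5 * a * t :=
    ⟨x / (6.5 * a), (one_le_div (by positivity)).mpr hx, by field_simp⟩
  have hlog_x : log (6.5 * a * t) = log 6.5 + log a + log t := by
    rw [log_mul (by positivity) (by positivity), log_mul (by norm_num) (by positivity)]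
  have hlog_succ : log (a + 1) ≤ a := by linarith [log_le_sub_one_of_pos (by linarith : 0 < a + 1)]
  have hlog_t : (a - 1) * log t ≤ (a - 1) * (t - 1) :=
    mul_le_mul_of_nonneg_left (log_le_sub_one_of_pos (by linarith)) (by linarith)
  have hlog_c : (a - 1) * log 6.5 ≤ (a - 1) * 2 :=
    mul_le_mul_of_nonneg_left log_six_point_five_le_two (by linarith)
  have hlog_k : log k ≤ 1.793 * (a + 1) :=
    hlogk.trans (by rw [div_le_iff₀ (by norm_num)]; linarith)
  have hat_nonneg : 0 ≤ (a - 1) * (t - 1) := mul_nonneg (by linarith) (by linarith)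
  rw [hlog_x]
  linarith

theorem stmt_9 (L : ℕ) (hL : 1 ≤ L) (k : ℝ) (hk : 0 < k)
    (hlogk : Real.log k ≤ ((L : ℝ) + 1) / 0.558) :
    ∀ x : ℝ, 6.5 * L ≤ x →
      -(Real.exp x / (2 * k)) * ((L : ℝ) / (Real.exp 1 * x)) ^ L
          + (L : ℝ) * ((L : ℝ) + 1) / (2 * x) < 0 := by
  intro x hx
  have hL' : (1 : ℝ) ≤ L := by exact_mod_cast hL
  have hx0 : 0 < x := by linarith
  suffices (L : ℝ) * (L + 1) / (2 * x) < exp x / (2 * k) * (L / (exp 1 * x)) ^ L by linarith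
  rw [← log_lt_log_iff (by positivity) (by positivity),
    log_exp_div_mul_div_pow hk hx0 (by positivity), log_div (by positivity) (by positivity),
    log_mul (by positivity) (by positivity), log_mul (by norm_num) hx0.ne',
    log_mul (by norm_num) hk.ne']
  linarith [log_mul_succ_sub_log_lt hL' hlogk hx]
end

section
/- Let L ∈ ℕ, k > 0, and let 0 < l ≤ r be real numbers. Then the function F : ℝ^{L+1} → ℝ defined by F(a) = sup_{λ ∈ [l, r]} [ (1/k)·Σ_{j=0}^L e^{−λ} a_j² λ^j j! + (e^{−λ} Σ_{j=0}^L a_j λ^j)² ] is strictly convex on ℝ^{L+1}. Consequently, F has at most one minimizer on the affine subspace {a ∈ ℝ^{L+1} : a_0 = −1}. -/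
open Finset

/-- The objective `F(a) = sup_{λ ∈ [l, r]}
`(1/k)·Σ_j e^{−λ} a_j² λ^j j! + (e^{−λ} Σ_j a_j λ^j)²`. -/
noncomputable def F (L : ℕ) (k l r : ℝ) (a : Fin (L + 1) → ℝ) : ℝ :=
  sSup ((fun x : ℝ =>
      (1 / k) * (∑ j : Fin (L + 1),
          Real.exp (-x) * (a j) ^ 2 * x ^ (j : ℕ) * ((j : ℕ).factorial : ℝ))
        + (Real.exp (-x) * ∑ j : Fin (L + 1), a j * x ^ (j : ℕ)) ^ 2) '' Set.Icc l r)

noncomputable def G (L : ℕ) (k : ℝ) (a : Fin (L + 1) → ℝ) (x : ℝ) : ℝ :=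
  (1 / k) * (∑ j : Fin (L + 1),
      Real.exp (-x) * (a j) ^ 2 * x ^ (j : ℕ) * ((j : ℕ).factorial : ℝ))
    + (Real.exp (-x) * ∑ j : Fin (L + 1), a j * x ^ (j : ℕ)) ^ 2

lemma G_cont (L : ℕ) (k : ℝ) (a : Fin (L + 1) → ℝ) : Continuous (G L k a) := by
  unfold G
  fun_prop

lemma sq_cvx {θ η u v : ℝ} (hθ : 0 < θ) (hη : 0 < η) (hθη : θ + η = 1) :
    (θ * u + η * v) ^ 2 ≤ θ * u ^ 2 + η * v ^ 2 := by
  nlinarith [mul_pos hθ hη, sq_nonneg (u - v)]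

lemma sq_cvx_strict {θ η u v : ℝ} (hθ : 0 < θ) (hη : 0 < η) (hθη : θ + η = 1)
    (huv : u ≠ v) : (θ * u + η * v) ^ 2 < θ * u ^ 2 + η * v ^ 2 := by
  nlinarith [mul_pos hθ hη, (sq_pos_of_ne_zero (sub_ne_zero.mpr huv) : 0 < (u - v) ^ 2)]

lemma G_strict_cvx (L : ℕ) (k : ℝ) (hk : 0 < k) (x : ℝ) (hx : 0 < x)
    {a b : Fin (L + 1) → ℝ} (hab : a ≠ b) {θ η : ℝ}
    (hθ : 0 < θ) (hη : 0 < η) (hθη : θ + η = 1) :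
    G L k (θ • a + η • b) x < θ * G L k a x + η * G L k b x := by
  unfold G
  have he : (0 : ℝ) < Real.exp (-x) := Real.exp_pos _
  -- quadratic diagonal part: strict inequality
  have hS : (∑ j : Fin (L + 1),
        Real.exp (-x) * ((θ • a + η • b) j) ^ 2 * x ^ (j : ℕ) * ((j : ℕ).factorial : ℝ))
      < θ * (∑ j : Fin (L + 1),
          Real.exp (-x) * (a j) ^ 2 * x ^ (j : ℕ) * ((j : ℕ).factorial : ℝ))
        + η * (∑ j : Fin (L + 1),
          Real.exp (-x) * (b j) ^ 2 * x ^ (j : ℕ) * ((j : ℕ).factorial : ℝ)) := by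
    rw [Finset.mul_sum, Finset.mul_sum, ← Finset.sum_add_distrib]
    obtain ⟨j0, hj0⟩ := Function.ne_iff.mp hab
    refine Finset.sum_lt_sum (fun j _ => ?_) ⟨j0, Finset.mem_univ _, ?_⟩
    · have hc : (0 : ℝ) < Real.exp (-x) * x ^ (j : ℕ) * ((j : ℕ).factorial : ℝ) := by
        positivity
      have hsq := sq_cvx (u := a j) (v := b j) hθ hη hθη
      have := mul_le_mul_of_nonneg_left hsq hc.le
      simp only [Pi.add_apply, Pi.smul_apply, smul_eq_mul]
      nlinarith [this]
    · have hc : (0 : ℝ) < Real.exp (-x) * x ^ (j0 : ℕ) * ((j0 : ℕ).factorial : ℝ) := by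
        positivity
      have hsq := sq_cvx_strict (u := a j0) (v := b j0) hθ hη hθη hj0
      have := mul_lt_mul_of_pos_left hsq hc
      simp only [Pi.add_apply, Pi.smul_apply, smul_eq_mul]
      nlinarith [this]
  -- linear part
  have hT : (∑ j : Fin (L + 1), (θ • a + η • b) j * x ^ (j : ℕ))
      = θ * (∑ j : Fin (L + 1), a j * x ^ (j : ℕ))
        + η * (∑ j : Fin (L + 1), b j * x ^ (j : ℕ)) := by
    rw [Finset.mul_sum, Finset.mul_sum, ← Finset.sum_add_distrib]
    refine Finset.sum_congr rfl fun j _ => ?_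
    simp only [Pi.add_apply, Pi.smul_apply, smul_eq_mul]
    ring
  have hT2 : (Real.exp (-x) * ∑ j : Fin (L + 1), (θ • a + η • b) j * x ^ (j : ℕ)) ^ 2
      ≤ θ * (Real.exp (-x) * ∑ j : Fin (L + 1), a j * x ^ (j : ℕ)) ^ 2
        + η * (Real.exp (-x) * ∑ j : Fin (L + 1), b j * x ^ (j : ℕ)) ^ 2 := by
    rw [hT]
    set U := ∑ j : Fin (L + 1), a j * x ^ (j : ℕ)
    set V := ∑ j : Fin (L + 1), b j * x ^ (j : ℕ)
    have hsq := sq_cvx (u := Real.exp (-x) * U) (v := Real.exp (-x) * V) hθ hη hθη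
    nlinarith [hsq]
  have hmul := mul_lt_mul_of_pos_left hS (by positivity : (0:ℝ) < 1 / k)
  nlinarith [hmul, hT2]

lemma F_eq (L : ℕ) (k l r : ℝ) (a : Fin (L + 1) → ℝ) :
    F L k l r a = sSup (G L k a '' Set.Icc l r) := rfl

lemma F_strict (L : ℕ) (k : ℝ) (hk : 0 < k) (l r : ℝ) (hl : 0 < l) (hlr : l ≤ r) :
    StrictConvexOn ℝ (Set.univ : Set (Fin (L + 1) → ℝ)) (F L k l r) := by
  refine ⟨convex_univ, fun a _ b _ hab θ η hθ hη hθη => ?_⟩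
  have hne : (Set.Icc l r).Nonempty := Set.nonempty_Icc.mpr hlr
  have hcomp : IsCompact (Set.Icc l r) := isCompact_Icc
  obtain ⟨x₀, hx₀, hEq⟩ := hcomp.exists_sSup_image_eq hne
    (G_cont L k (θ • a + η • b)).continuousOn
  have hx₀pos : 0 < x₀ := lt_of_lt_of_le hl hx₀.1
  have hstep := G_strict_cvx L k hk x₀ hx₀pos hab hθ hη hθη
  have hFa : G L k a x₀ ≤ F L k l r a := by
    rw [F_eq]
    exact le_csSup (hcomp.bddAbove_image (G_cont L k a).continuousOn)
      (Set.mem_image_of_mem _ hx₀)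
  have hFb : G L k b x₀ ≤ F L k l r b := by
    rw [F_eq]
    exact le_csSup (hcomp.bddAbove_image (G_cont L k b).continuousOn)
      (Set.mem_image_of_mem _ hx₀)
  have : F L k l r (θ • a + η • b) = G L k (θ • a + η • b) x₀ := by
    rw [F_eq]; exact hEq
  rw [this]
  calc G L k (θ • a + η • b) x₀ < θ * G L k a x₀ + η * G L k b x₀ := hstep
    _ ≤ θ * F L k l r a + η * F L k l r b := by
        have h1 := mul_le_mul_of_nonneg_left hFa hθ.le
        have h2 := mul_le_mul_of_nonneg_left hFb hη.le
        linarith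
    _ = θ • F L k l r a + η • F L k l r b := by simp [smul_eq_mul]

theorem stmt_12 (L : ℕ) (k : ℝ) (hk : 0 < k) (l r : ℝ) (hl : 0 < l) (hlr : l ≤ r) :
    StrictConvexOn ℝ (Set.univ : Set (Fin (L + 1) → ℝ)) (F L k l r) ∧
    ∀ a b : Fin (L + 1) → ℝ, a 0 = -1 → b 0 = -1 →
      (∀ c : Fin (L + 1) → ℝ, c 0 = -1 → F L k l r a ≤ F L k l r c) →
      (∀ c : Fin (L + 1) → ℝ, c 0 = -1 → F L k l r b ≤ F L k l r c) →
      a = b := by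
  have hsc := F_strict L k hk l r hl hlr
  refine ⟨hsc, fun a b ha0 hb0 hmina hminb => ?_⟩
  by_contra hab
  set m : Fin (L + 1) → ℝ := (1/2 : ℝ) • a + (1/2 : ℝ) • b with hm
  have hm0 : m 0 = -1 := by
    simp [hm, Pi.add_apply, Pi.smul_apply, smul_eq_mul, ha0, hb0]
    ring
  have hlt := hsc.2 (Set.mem_univ a) (Set.mem_univ b) hab
    (by norm_num : (0:ℝ) < 1/2) (by norm_num : (0:ℝ) < 1/2) (by norm_num)
  have h1 : F L k l r a ≤ F L k l r m := hmina m hm0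
  have h2 : F L k l r b ≤ F L k l r m := hminb m hm0
  simp only [smul_eq_mul, ← hm] at hlt
  linarith
end

section
/- Let L ∈ ℕ and a = (a_0, …, a_L) ∈ ℝ^{L+1} with a_0 = −1. Let I be a finite index set, let λ : I → ℝ with λ_i ≥ 0 for all i, and let (N_i)_{i ∈ I} be independent random variables where N_i is Poisson with mean λ_i when λ_i > 0 and N_i = 0 almost surely when λ_i = 0. Let S = #{i ∈ I : λ_i > 0} and Ŝ = Σ_{i ∈ I} g_L(N_i). Then E[(Ŝ − S)²] = Σ_{i : λ_i > 0} ( Σ_{l=0}^L e^{−λ_i} a_l² λ_i^l l! ) + Σ_{i ≠ j : λ_i > 0, λ_j > 0} ( e^{−λ_i} P_L(λ_i, a) )·( e^{−λ_j} P_L(λ_j, a) ). -/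
/-!
Since `g_L(0) = 0`, the indices with `λ_i = 0` contribute nothing almost surely, so
`Ŝ - S = ∑_{λ_i > 0} (g_L(N_i) - 1)`. Expanding the square, independence factors the
off-diagonal terms, and the factorials in `g_L - 1` cancel those of the Poisson weights, giving
`E[g_L(N) - 1] = e^{-λ} P_L(λ, a)` and `E[(g_L(N) - 1)²] = ∑_{l ≤ L} e^{-λ} a_l² λ^l l!`.
-/

open Finset MeasureTheory ProbabilityTheory

/-- The estimator function `g_L`: `g_L(j) = a_j·j! + 1` for `j ≤ L`, and `g_L(j) = 1`
for `j > L`. -/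
noncomputable def gL (L : ℕ) (a : ℕ → ℝ) (j : ℕ) : ℝ :=
  if j ≤ L then a j * (j.factorial : ℝ) + 1 else 1

theorem integral_sq_sum_of_iIndepFun {Ω ι : Type*} [MeasurableSpace Ω] {μ : Measure Ω}
    [DecidableEq ι] {f : ι → Ω → ℝ} (hf : ∀ i, MemLp (f i) 2 μ) (hindep : iIndepFun f μ)
    (s : Finset ι) :
    ∫ ω, (∑ i ∈ s, f i ω) ^ 2 ∂μ
      = ∑ i ∈ s, ∫ ω, f i ω ^ 2 ∂μ + ∑ p ∈ s.offDiag, (∫ ω, f p.1 ω ∂μ) * ∫ ω, f p.2 ω ∂μ := by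
  have hexpand : ∀ ω, (∑ i ∈ s, f i ω) ^ 2 = ∑ p ∈ s ×ˢ s, f p.1 ω * f p.2 ω := fun ω => by
    rw [sq, sum_mul_sum, sum_product]
  simp_rw [hexpand]
  rw [integral_finsetSum _ fun p _ => (hf p.1).integrable_mul (hf p.2),
    ← diag_union_offDiag, sum_union (disjoint_diag_offDiag _), sum_diag]
  congr 1
  · simp_rw [sq]
  · refine sum_congr rfl fun p hp => ?_
    exact (hindep.indepFun (mem_offDiag.1 hp).2.2).integral_fun_mul_eq_mul_integral
      (hf p.1).aestronglyMeasurable (hf p.2).aestronglyMeasurable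

theorem integral_poissonMeasure_eq_sum_range {r : NNReal} (L : ℕ) {h : ℕ → ℝ}
    (hh : ∀ n, L < n → h n = 0) :
    ∫ n, h n ∂poissonMeasure r
      = ∑ n ∈ range (L + 1), Real.exp (-r) * r ^ n / n.factorial * h n := by
  rw [integral_poissonMeasure, tsum_eq_sum (s := range (L + 1)) fun n hn => by
    rw [hh n (by simpa using hn), smul_zero]]
  rfl

section gL

variable {L : ℕ} {a : ℕ → ℝ}

theorem gL_zero (ha0 : a 0 = -1) : gL L a 0 = 0 := by
  simp [gL, ha0]

theorem gL_sub_one (n : ℕ) : gL L a n - 1 = if n ≤ L then a n * n.factorial else 0 := by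
  unfold gL; split_ifs <;> ring

theorem gL_sub_one_eq_zero {n : ℕ} (hn : L < n) : gL L a n - 1 = 0 := by
  rw [gL_sub_one, if_neg hn.not_ge]

theorem abs_gL_sub_one_le (n : ℕ) :
    |gL L a n - 1| ≤ ∑ l ∈ range (L + 1), |a l * l.factorial| := by
  rw [gL_sub_one]
  split_ifs with hn
  · exact single_le_sum (f := fun l => |a l * l.factorial|) (fun _ _ => abs_nonneg _)
      (mem_range_succ_iff.2 hn)
  · simpa using sum_nonneg fun l _ => abs_nonneg (a l * l.factorial)

theorem integral_gL_sub_one_poissonMeasure (r : NNReal) :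
    ∫ n, (gL L a n - 1) ∂poissonMeasure r = Real.exp (-r) * P L a r := by
  rw [integral_poissonMeasure_eq_sum_range L fun n => gL_sub_one_eq_zero, P, mul_sum]
  refine sum_congr rfl fun n hn => ?_
  rw [gL_sub_one, if_pos (mem_range_succ_iff.1 hn)]
  field_simp

theorem integral_gL_sub_one_sq_poissonMeasure (r : NNReal) :
    ∫ n, (gL L a n - 1) ^ 2 ∂poissonMeasure r
      = ∑ l ∈ range (L + 1), Real.exp (-r) * a l ^ 2 * r ^ l * l.factorial := by
  rw [integral_poissonMeasure_eq_sum_range L fun n hn => by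
    rw [gL_sub_one_eq_zero hn, zero_pow two_ne_zero]]
  refine sum_congr rfl fun n hn => ?_
  rw [gL_sub_one, if_pos (mem_range_succ_iff.1 hn)]
  field_simp

end gL

open Classical in
theorem stmt_15 {Ω : Type*} [MeasurableSpace Ω] (μ : Measure Ω) [IsProbabilityMeasure μ]
    {I : Type*} [Fintype I] (L : ℕ) (a : ℕ → ℝ) (ha0 : a 0 = -1)
    (lam : I → ℝ) (hlam : ∀ i, 0 ≤ lam i)
    (N : I → Ω → ℕ) (hmeas : ∀ i, Measurable (N i))
    (hindep : iIndepFun N μ)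
    (hpois : ∀ i, 0 < lam i → μ.map (N i) = poissonMeasure (lam i).toNNReal)
    (hzero : ∀ i, lam i = 0 → ∀ᵐ ω ∂μ, N i ω = 0) :
    (∫ ω, ((∑ i : I, gL L a (N i ω)) -
        ((Finset.univ.filter fun i : I => 0 < lam i).card : ℝ)) ^ 2 ∂μ)
      = (∑ i ∈ Finset.univ.filter fun i : I => 0 < lam i,
          ∑ l ∈ range (L + 1),
            Real.exp (-(lam i)) * (a l) ^ 2 * (lam i) ^ l * (l.factorial : ℝ))
        + ∑ p ∈ (Finset.univ.filter fun i : I => 0 < lam i).offDiag,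
            (Real.exp (-(lam p.1)) * P L a (lam p.1)) *
              (Real.exp (-(lam p.2)) * P L a (lam p.2)) := by
  set s := univ.filter fun i : I => 0 < lam i
  set X : I → Ω → ℝ := fun i ω => gL L a (N i ω) - 1
  have hlaw : ∀ i ∈ s, ∀ h : ℕ → ℝ,
      ∫ ω, h (N i ω) ∂μ = ∫ n, h n ∂poissonMeasure (lam i).toNNReal := fun i hi h => by
    rw [← hpois i (mem_filter.1 hi).2,
      integral_map (hmeas i).aemeasurable measurable_from_nat.aestronglyMeasurable]
  have hcentered : ∀ᵐ ω ∂μ, (∑ i, gL L a (N i ω)) - (s.card : ℝ) = ∑ i ∈ s, X i ω := by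
    have hoff : ∀ᵐ ω ∂μ, ∀ i ∉ s, N i ω = 0 := ae_all_iff.2 fun i => by
      by_cases hi : i ∈ s
      · exact .of_forall fun _ h => absurd hi h
      · filter_upwards [hzero i (le_antisymm (by simpa [s] using hi) (hlam i))] with ω hω _ using hω
    filter_upwards [hoff] with ω hω
    rw [← sum_subset (subset_univ s) fun i _ hi => by rw [hω i hi, gL_zero ha0]]
    simp [X, sum_sub_distrib]
  have hX : ∀ i, MemLp (X i) 2 μ := fun i =>
    .of_bound ((measurable_from_nat (f := fun n => gL L a n - 1)).comp
      (hmeas i)).aestronglyMeasurable _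
      (.of_forall fun ω => (Real.norm_eq_abs _).trans_le (abs_gL_sub_one_le (N i ω)))
  have hXindep : iIndepFun X μ :=
    hindep.comp (fun _ n => gL L a n - 1) fun _ => measurable_from_nat
  rw [integral_congr_ae (hcentered.mono fun _ h => congrArg (· ^ 2) h),
    integral_sq_sum_of_iIndepFun hX hXindep]
  congr 1
  · refine sum_congr rfl fun i hi => ?_
    rw [hlaw i hi fun n => (gL L a n - 1) ^ 2, integral_gL_sub_one_sq_poissonMeasure,
      Real.coe_toNNReal _ (hlam i)]
  · refine sum_congr rfl fun p hp => ?_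
    obtain ⟨h1, h2, -⟩ := mem_offDiag.1 hp
    rw [hlaw p.1 h1 fun n => gL L a n - 1, hlaw p.2 h2 fun n => gL L a n - 1,
      integral_gL_sub_one_poissonMeasure, integral_gL_sub_one_poissonMeasure,
      Real.coe_toNNReal _ (hlam _), Real.coe_toNNReal _ (hlam _)]
end
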